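/- (Absence of Fast Finalization) Let firstVote be a partial map from the n replicas to blocks recording at most one first vote per replica as seen by a replica Q, let allVotes be the number of replicas with a recorded vote, and maxVotes the maximum number of recorded votes on any single non-timeout block. If allVotes - maxVotes ≥ f + p + 1 and n ≥ 3f + 2p + 1 with at most f corrupt replicas, then no block can be fast finalized (i.e., for no block B do at least n - p - f' honest replicas first vote for B, where f' ≤ f is the number of corrupt replicas). -/

import Mathlib

/-!
Since `B`'s recorded votes number at most `maxVotes`, the gap hypothesis leaves at least
`f + p + 1` replicas that `Q` records with a vote other than `B`. None of them is an honest first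
voter for `B`, because an honest replica's recorded vote is its first vote. Both groups lie among
the `n` replicas, so at most `n - (f + p + 1) < n - p - f'` honest replicas first vote for `B`.
-/

namespace Finset

variable {α β : Type*}

lemma card_filter_le_sup (s : Finset α) {p : α → Prop} [DecidablePred p] {g : α → ℕ}
    (h : ∀ a ∈ s, p a → #(s.filter p) ≤ g a) : #(s.filter p) ≤ s.sup g := by
  rcases (s.filter p).eq_empty_or_nonempty with hempty | ⟨a, ha⟩
  · simp [hempty]
  · rw [mem_filter] at ha
    exact (h a ha.1 ha.2).trans (le_sup ha.1)

variable [DecidableEq β]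

lemma card_filter_eq_some_add_card_filter_ne_some (s : Finset α) (view : α → Option β) (b : β) :
    #(s.filter fun a => view a = some b) + #(s.filter fun a => view a ≠ none ∧ view a ≠ some b) =
      #(s.filter fun a => view a ≠ none) := by
  rw [← card_filter_add_card_filter_not (s := s.filter fun a => view a ≠ none)
    (fun a => view a = some b), filter_filter, filter_filter]
  congr 2
  ext a
  grind

lemma card_filter_ne_none_sub_le {s : Finset α} {view : α → Option β} {b : β} {M : ℕ}
    (hM : #(s.filter fun a => view a = some b) ≤ M) :
    #(s.filter fun a => view a ≠ none) - M ≤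
      #(s.filter fun a => view a ≠ none ∧ view a ≠ some b) := by
  have := card_filter_eq_some_add_card_filter_ne_some s view b
  omega

lemma disjoint_filter_eq_some_filter_ne_some {s t : Finset α} {first view : α → Option β}
    (hagree : ∀ a ∈ s, ∀ b, view a = some b → first a = some b) (b : β) :
    Disjoint (s.filter fun a => first a = some b)
      (t.filter fun a => view a ≠ none ∧ view a ≠ some b) := by
  simp only [disjoint_left, mem_filter]
  rintro a ⟨ha, hfirst⟩ ⟨-, hrecorded, hother⟩
  obtain ⟨c, hc⟩ := Option.ne_none_iff_exists'.mp hrecorded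
  exact hother (hc.trans ((hagree a ha c hc).symm.trans hfirst))

end Finset

open Finset

theorem absence_of_fast_finalization
    {α Block : Type} [DecidableEq α] [DecidableEq Block]
    (n f p f' : ℕ) (hf' : f' ≤ f)
    (R : Finset α) (hR : R.card = n)
    (corrupt : Finset α)
    (timeout : Block)
    (firstVote : α → Option Block)   -- actual first vote of each (honest) replica
    (viewQ : α → Option Block)       -- Q records at most one first vote per replica
    (hagree : ∀ r ∈ R \ corrupt, ∀ b : Block, viewQ r = some b → firstVote r = some b)
    (hgap :
      (R.filter (fun r => viewQ r ≠ none)).card -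
        (R.sup (fun r =>
          match viewQ r with
          | none => 0
          | some B =>
              if B = timeout then 0
              else (R.filter (fun r' => viewQ r' = some B)).card)) ≥ f + p + 1) :
    ∀ B : Block, B ≠ timeout →
      ((R \ corrupt).filter (fun r => firstVote r = some B)).card < n - p - f' := by
  intro B hB
  have hother := hgap.trans <|
    card_filter_ne_none_sub_le (b := B) <| card_filter_le_sup R fun r _ hr => by simp [hr, hB]
  have hdisj := disjoint_filter_eq_some_filter_ne_some (t := R) hagree B
  have hcover := (card_union_of_disjoint hdisj).symm.trans_le <|
    card_le_card <| union_subset ((filter_subset _ _).trans sdiff_subset) (filter_subset _ R)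
  omega
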